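/- Let f : [m,M] → ℝ be concave with m < M, a, b ∈ [m,M], v ∈ [0,1]. Then f((1-v)a + v b) ≤ (1-v)f(a) + v f(b) + 2β̃(m,M,f), where β̃(m,M,f) = max_{t∈[m,M]} ( f(t) - (f(M)-f(m))/(M-m)·(t-m) - f(m) ). -/

import Mathlib

/-!
Subtracting the chord through `(m, f m)` and `(M, f M)` from `f` leaves a concave function `g`
vanishing at `m` and `M`, hence nonnegative on `[m, M]`, whose supremum there is `β̃`. Since the
chord is affine, the Jensen gap of `f` equals that of `g`, which is at most
`g ((1 - v) a + v b) ≤ β̃ ≤ 2 β̃`.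
-/

open Set

noncomputable def chordGap (f : ℝ → ℝ) (m M : ℝ) (t : ℝ) : ℝ :=
  f t - (f M - f m) / (M - m) * (t - m) - f m

section ChordGap

variable {f : ℝ → ℝ} {m M : ℝ}

@[simp]
lemma chordGap_left : chordGap f m M m = 0 := by
  simp [chordGap]

lemma chordGap_right (hmM : m ≠ M) : chordGap f m M M = 0 := by
  have : M - m ≠ 0 := sub_ne_zero.2 hmM.symm
  simp only [chordGap]
  field_simp
  ring

lemma concaveOn_chordGap {s : Set ℝ} (hf : ConcaveOn ℝ s f) (m M : ℝ) :
    ConcaveOn ℝ s (chordGap f m M) := by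
  refine ⟨hf.1, fun x hx y hy a b ha hb hab => ?_⟩
  have hjensen := hf.2 hx hy ha hb hab
  simp only [smul_eq_mul, chordGap] at hjensen ⊢
  linear_combination hjensen + ((f M - f m) / (M - m) * m - f m) * hab

lemma chordGap_nonneg (hf : ConcaveOn ℝ (Icc m M) f) (hmM : m < M) {t : ℝ}
    (ht : t ∈ Icc m M) : 0 ≤ chordGap f m M t := by
  have hmin := (concaveOn_chordGap hf m M).min_le_of_mem_Icc (left_mem_Icc.2 hmM.le)
    (right_mem_Icc.2 hmM.le) ht
  rwa [chordGap_left, chordGap_right hmM.ne, min_self] at hmin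

lemma chordGap_jensen_gap (a b v : ℝ) :
    (1 - v) * chordGap f m M a + v * chordGap f m M b - chordGap f m M ((1 - v) * a + v * b) =
      (1 - v) * f a + v * f b - f ((1 - v) * a + v * b) := by
  simp only [chordGap]
  ring

end ChordGap

/-- Concavity at `t` and its mirror image `m + M - t` bounds `g t` by
`2 g ((m + M) / 2) - min (g m) (g M)`. -/
lemma ConcaveOn.bddAbove_image_Icc {g : ℝ → ℝ} {m M : ℝ} (hg : ConcaveOn ℝ (Icc m M) g) :
    BddAbove (g '' Icc m M) := by
  refine ⟨2 * g ((m + M) / 2) - min (g m) (g M), ?_⟩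
  rintro _ ⟨t, ht, rfl⟩
  have hmM : m ≤ M := ht.1.trans ht.2
  have ht' : m + M - t ∈ Icc m M := ⟨by linarith [ht.2], by linarith [ht.1]⟩
  have hmid := hg.2 ht ht' (by norm_num : (0 : ℝ) ≤ 1 / 2) (by norm_num : (0 : ℝ) ≤ 1 / 2)
    (by norm_num)
  have hmin := hg.min_le_of_mem_Icc (left_mem_Icc.2 hmM) (right_mem_Icc.2 hmM) ht'
  simp only [smul_eq_mul] at hmid
  rw [show 1 / 2 * t + 1 / 2 * (m + M - t) = (m + M) / 2 by ring] at hmid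
  linarith

theorem concave_additive_reverse_jensen (m M : ℝ) (hmM : m < M) (f : ℝ → ℝ)
    (hf : ConcaveOn ℝ (Set.Icc m M) f)
    (a b v : ℝ) (ha : a ∈ Set.Icc m M) (hb : b ∈ Set.Icc m M)
    (hv : v ∈ Set.Icc (0:ℝ) 1)
    (βt : ℝ)
    (hβt : βt = sSup ((fun t => f t - (f M - f m) / (M - m) * (t - m) - f m) '' Set.Icc m M)) :
    f ((1-v) * a + v * b) ≤ (1-v) * f a + v * f b + 2 * βt := by
  change βt = sSup (chordGap f m M '' Icc m M) at hβt
  have hbdd := (concaveOn_chordGap hf m M).bddAbove_image_Icc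
  have hx : (1 - v) * a + v * b ∈ Icc m M := by
    simpa using (convex_Icc m M) ha hb (sub_nonneg.2 hv.2) hv.1 (by ring)
  have hgx : chordGap f m M ((1 - v) * a + v * b) ≤ βt :=
    hβt ▸ le_csSup hbdd ⟨_, hx, rfl⟩
  have hβ_nonneg : 0 ≤ βt :=
    hβt ▸ le_csSup_of_le hbdd ⟨m, left_mem_Icc.2 hmM.le, rfl⟩ chordGap_left.ge
  have hga := chordGap_nonneg hf hmM ha
  have hgb := chordGap_nonneg hf hmM hb
  have hgap := chordGap_jensen_gap (f := f) (m := m) (M := M) a b v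
  linarith [mul_nonneg (sub_nonneg.2 hv.2) hga, mul_nonneg hv.1 hgb]
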